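/- Let p > 3 and q be odd primes such that q divides R_p but q^2 does not divide R_p, where R_n = (10^n - 1)/9. Then for every integer n ≥ 1, q^2 does not divide R_{p^n}. -/
import Mathlib

def repunit (n : ℕ) : ℕ := (10 ^ n - 1) / 9

lemma nine_mul_repunit (m : ℕ) : 9 * repunit m = 10 ^ m - 1 := by
  have h : (9 : ℕ) ∣ 10 ^ m - 1 := by
    have := Nat.sub_dvd_pow_sub_pow 10 1 m
    simpa using this
  rw [repunit, Nat.mul_div_cancel' h]

lemma cast_repunit (m : ℕ) : (9 : ℤ) * (repunit m : ℤ) = 10 ^ m - 1 := by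
  have h := nine_mul_repunit m
  have h1 : (1:ℕ) ≤ 10 ^ m := Nat.one_le_pow _ _ (by norm_num)
  have : ((9 * repunit m : ℕ) : ℤ) = ((10 ^ m - 1 : ℕ) : ℤ) := by rw [h]
  push_cast [Nat.cast_sub h1] at this
  linarith

theorem sq_not_dvd_repunit_pow (p q : ℕ) (hp : p.Prime) (hp3 : 3 < p)
    (hq : q.Prime) (hqo : Odd q) (h1 : q ∣ repunit p) (h2 : ¬ q ^ 2 ∣ repunit p) :
    ∀ n : ℕ, 1 ≤ n → ¬ q ^ 2 ∣ repunit (p ^ n) := by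
  haveI := Fact.mk hq
  -- q ≠ 3
  have hq3 : q ≠ 3 := by
    rintro rfl
    have h27 : (27 : ℕ) ∣ 10 ^ p - 1 := by
      rw [← nine_mul_repunit]
      obtain ⟨k, hk⟩ := h1
      exact ⟨k, by omega⟩
    have h1le : (1:ℕ) ≤ 10 ^ p := Nat.one_le_pow _ _ (by norm_num)
    have hmod : (10 ^ p : ℕ) ≡ 1 [MOD 27] := (Nat.modEq_iff_dvd' h1le).mpr h27 |>.symm
    have hz : ((10:ZMod 27)) ^ p = 1 := by
      have := (ZMod.natCast_eq_natCast_iff _ _ _).mpr hmod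
      push_cast at this
      simpa using this
    have hord : orderOf (10 : ZMod 27) = 3 :=
      orderOf_eq_prime (by decide) (by decide)
    have : (3 : ℕ) ∣ p := hord ▸ orderOf_dvd_of_pow_eq_one hz
    have := (Nat.Prime.eq_one_or_self_of_dvd hp 3 this)
    omega
  -- q ∣ 10^p - 1, so (10 : ZMod q)^p = 1
  have hq10 : q ∣ 10 ^ p - 1 := by
    rw [← nine_mul_repunit]; exact h1.mul_left 9
  have h1le : (1:ℕ) ≤ 10 ^ p := Nat.one_le_pow _ _ (by norm_num)
  have hzq : ((10:ZMod q)) ^ p = 1 := by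
    have hmod : (10 ^ p : ℕ) ≡ 1 [MOD q] := (Nat.modEq_iff_dvd' h1le).mpr hq10 |>.symm
    have := (ZMod.natCast_eq_natCast_iff _ _ _).mpr hmod
    push_cast at this
    simpa using this
  -- q ≠ p
  have hqp : q ≠ p := by
    rintro rfl
    have hfermat : (10 : ZMod q) ^ q = 10 := ZMod.pow_card 10
    have h10 : (10 : ZMod q) = 1 := by rw [← hfermat, hzq]
    have : ((10 : ℕ) : ZMod q) = ((1 : ℕ) : ZMod q) := by push_cast; exact h10
    have hmod := (ZMod.natCast_eq_natCast_iff _ _ _).mp this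
    have h9 : q ∣ 9 := (Nat.modEq_iff_dvd' (by norm_num)).mp hmod.symm
    have h33 : q ∣ 3 * 3 := by simpa using h9
    have : q = 3 := (Nat.prime_dvd_prime_iff_eq hq (by norm_num)).mp ((hq.dvd_mul.mp h33).elim id id)
    exact hq3 this
  intro n hn hdvd
  -- setup
  set d := p ^ (n - 1) with hd
  have hpn : p ^ n = p * d := by
    rw [hd, ← pow_succ']
    congr 1; omega
  have hgeom : (∑ i ∈ Finset.range d, ((10:ℤ)^p) ^ i) * ((10:ℤ)^p - 1)
      = ((10:ℤ)^p) ^ d - 1 := geom_sum_mul _ d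
  have hxd : ((10:ℤ)^p) ^ d = 10 ^ (p ^ n) := by rw [← pow_mul, ← hpn]
  -- q^2 ∣ (10^p)^d - 1
  have hdvd2 : (q:ℤ) ^ 2 ∣ ((10:ℤ)^p) ^ d - 1 := by
    rw [hxd, ← cast_repunit]
    exact Dvd.dvd.mul_left (by exact_mod_cast hdvd) 9
  -- q ∤ S
  have hqS : ¬ (q:ℤ) ∣ ∑ i ∈ Finset.range d, ((10:ℤ)^p) ^ i := by
    rw [← ZMod.intCast_zmod_eq_zero_iff_dvd]
    have hcast : ((((∑ i ∈ Finset.range d, ((10:ℤ)^p) ^ i) : ℤ)) : ZMod q)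
        = (d : ZMod q) := by
      push_cast
      simp [hzq]
    rw [hcast, hd]
    push_cast
    have hpne : (p : ZMod q) ≠ 0 := by
      rw [Ne, ZMod.natCast_eq_zero_iff]
      intro hqd
      exact hqp ((Nat.prime_dvd_prime_iff_eq hq hp).mp hqd)
    exact pow_ne_zero _ hpne
  -- hence q^2 ∣ 10^p - 1
  have hqprime : Prime (q : ℤ) := Nat.prime_iff_prime_int.mp hq
  have hcop : IsCoprime ((q:ℤ)^2) (∑ i ∈ Finset.range d, ((10:ℤ)^p) ^ i) :=
    IsCoprime.pow_left ((hqprime.coprime_iff_not_dvd).mpr hqS)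
  have hx1 : (q:ℤ)^2 ∣ (10:ℤ)^p - 1 := hcop.dvd_of_dvd_mul_left (hgeom ▸ hdvd2)
  -- q^2 ∣ 9 * R_p, coprime to 9, so q^2 ∣ R_p
  have hx9 : (q:ℤ)^2 ∣ 9 * (repunit p : ℤ) := by rwa [cast_repunit]
  have hq9 : ¬ (q:ℤ) ∣ 9 := by
    intro hdq
    have h9 : q ∣ 9 := by exact_mod_cast hdq
    have h33 : q ∣ 3 * 3 := by simpa using h9
    exact hq3 ((Nat.prime_dvd_prime_iff_eq hq (by norm_num)).mp ((hq.dvd_mul.mp h33).elim id id))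
  have hcop9 : IsCoprime ((q:ℤ)^2) (9:ℤ) := IsCoprime.pow_left ((hqprime.coprime_iff_not_dvd).mpr hq9)
  have : (q:ℤ)^2 ∣ (repunit p : ℤ) := hcop9.dvd_of_dvd_mul_left hx9
  exact h2 (by exact_mod_cast this)
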